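/- For every real number x ≥ 1, the sequence of truncated nested radicals S m x converges to x + 1 as m → ∞; that is, x + 1 = √(1 + x√(1 + (x+1)√(1 + (x+2)√(...)))). -/
import Mathlib


noncomputable def S : ℕ → ℝ → ℝ
  | 0, _ => 0
  | m + 1, y => Real.sqrt (1 + y * S m (y + 1))

lemma S_nonneg (m : ℕ) (y : ℝ) : 0 ≤ S m y := by
  cases m with
  | zero => simp [S]
  | succ n => exact Real.sqrt_nonneg _

lemma S_le (m : ℕ) : ∀ y : ℝ, 0 ≤ y → S m y ≤ y + 1 := by
  induction m with
  | zero => intro y hy; simp [S]; linarith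
  | succ n ih =>
    intro y hy
    have h1 : S n (y + 1) ≤ y + 2 := by
      have := ih (y + 1) (by linarith)
      linarith
    have h2 : 1 + y * S n (y + 1) ≤ (y + 1) ^ 2 := by
      nlinarith [S_nonneg n (y + 1)]
    calc S (n + 1) y = Real.sqrt (1 + y * S n (y + 1)) := rfl
      _ ≤ Real.sqrt ((y + 1) ^ 2) := Real.sqrt_le_sqrt h2
      _ = y + 1 := by rw [Real.sqrt_sq (by linarith)]

lemma S_ge (m : ℕ) : ∀ y : ℝ, 1 ≤ y → y + 1 - y * (y + 1) / (y + m) ≤ S m y := by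
  induction m with
  | zero =>
    intro y hy
    have hy0 : y ≠ 0 := by linarith
    simp only [S, Nat.cast_zero, add_zero]
    have : y * (y + 1) / y = y + 1 := by field_simp
    rw [this]
    linarith
  | succ n ih =>
    intro y hy
    have hS : S (n + 1) y = Real.sqrt (1 + y * S n (y + 1)) := rfl
    have harg : (0:ℝ) ≤ 1 + y * S n (y + 1) := by
      nlinarith [S_nonneg n (y + 1)]
    have hsq : (S (n + 1) y) ^ 2 = 1 + y * S n (y + 1) := by
      rw [hS, Real.sq_sqrt harg]
    have hub : S (n + 1) y ≤ y + 1 := S_le (n + 1) y (by linarith)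
    have hge1 : 1 ≤ S (n + 1) y := by
      rw [hS]
      have h := Real.sqrt_le_sqrt (show (1:ℝ) ≤ 1 + y * S n (y + 1) by
        nlinarith [S_nonneg n (y + 1)])
      simpa using h
    have hih := ih (y + 1) (by linarith)
    have hd : (0:ℝ) < y + 1 + n := by positivity
    have h2 : (0:ℝ) < y + 2 := by linarith
    -- key: (y+1)^2 - S^2 ≤ y * ((y+1)*(y+2)/(y+1+n))
    have key : (y + 1) ^ 2 - (S (n + 1) y) ^ 2
        ≤ y * ((y + 1) * (y + 1 + 1) / (y + 1 + ↑n)) := by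
      rw [hsq]
      have h1 : (y + 2) - S n (y + 1) ≤ (y + 1) * (y + 1 + 1) / (y + 1 + ↑n) := by
        linarith [hih]
      calc (y + 1) ^ 2 - (1 + y * S n (y + 1)) = y * ((y + 2) - S n (y + 1)) := by ring
        _ ≤ y * ((y + 1) * (y + 1 + 1) / (y + 1 + ↑n)) :=
            mul_le_mul_of_nonneg_left h1 (by linarith)
    have hfac : ((y + 1) - S (n + 1) y) * (y + 2) ≤ (y + 1) ^ 2 - (S (n + 1) y) ^ 2 := by
      nlinarith
    have hfinal : (y + 1) - S (n + 1) y ≤ y * (y + 1) / (y + 1 + ↑n) := by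
      rw [le_div_iff₀ hd]
      have k1 : ((y + 1) ^ 2 - (S (n + 1) y) ^ 2) * (y + 1 + ↑n)
          ≤ y * ((y + 1) * (y + 1 + 1) / (y + 1 + ↑n)) * (y + 1 + ↑n) :=
        mul_le_mul_of_nonneg_right key hd.le
      have k2 : y * ((y + 1) * (y + 1 + 1) / (y + 1 + ↑n)) * (y + 1 + ↑n)
          = y * ((y + 1) * (y + 1 + 1)) := by field_simp
      have k3 : (((y + 1) - S (n + 1) y) * (y + 2)) * (y + 1 + ↑n)
          ≤ ((y + 1) ^ 2 - (S (n + 1) y) ^ 2) * (y + 1 + ↑n) :=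
        mul_le_mul_of_nonneg_right hfac hd.le
      nlinarith [k1, k2, k3, h2, hub]
    have hden : y + ((n + 1 : ℕ) : ℝ) = y + 1 + ↑n := by push_cast; ring
    rw [hden]
    linarith [hfinal]

theorem nested_sqrt_radical_eq (x : ℝ) (hx : 1 ≤ x) :
    Filter.Tendsto (fun m => S m x) Filter.atTop (nhds (x + 1)) := by
  have hub : ∀ m : ℕ, S m x ≤ x + 1 := fun m => S_le m x (by linarith)
  have hlb : ∀ m : ℕ, x + 1 - x * (x + 1) / (x + m) ≤ S m x := fun m => S_ge m x hx
  have htop : Filter.Tendsto (fun m : ℕ => x + (m : ℝ)) Filter.atTop Filter.atTop :=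
    Filter.tendsto_atTop_add_const_left _ _ tendsto_natCast_atTop_atTop
  have h0 : Filter.Tendsto (fun m : ℕ => x * (x + 1) / (x + m)) Filter.atTop (nhds 0) :=
    Filter.Tendsto.div_atTop tendsto_const_nhds htop
  have hlow : Filter.Tendsto (fun m : ℕ => x + 1 - x * (x + 1) / (x + m)) Filter.atTop
      (nhds (x + 1)) := by
    have := (tendsto_const_nhds (x := x + 1) (f := Filter.atTop (α := ℕ))).sub h0
    simpa using this
  exact tendsto_of_tendsto_of_tendsto_of_le_of_le hlow tendsto_const_nhds hlb hub
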